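/- arXiv:2102.12586 — 4 statements merged into one kernel-verified Lean document; each statement's English description precedes it below -/
import Mathlib

section
/- (Variational/min-max characterization of ERMI) Let p be a joint pmf on [m]×[k] with strictly positive marginals. Define for a matrix W ∈ ℝ^{k×m} the function Ψ(W) = −Tr(W P_ŷ Wᵀ) + 2 Tr(W P_{ŷ,s} P_s^{−1/2}) − 1, where P_ŷ = diag(p_Ŷ(1),…,p_Ŷ(m)), P_s = diag(p_S(1),…,p_S(k)), and (P_{ŷ,s})_{j,r} = p(j,r). Then sup over all W ∈ ℝ^{k×m} of Ψ(W) is attained and equals D_R(Ŷ;S) = ∑_{j,r} p(j,r)²/(p_Ŷ(j) p_S(r)) − 1. -/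
/-!
After expanding the traces, `Ψ(W) + 1 = ∑_{r,j} (2 b_{rj} W_{rj} - p_Ŷ(j) W_{rj}²)` with
`b_{rj} = p(j,r) / √p_S(r)`, a sum of independent concave quadratics in the entries of `W`.
Each one is maximised, by completing the square, at `W_{rj} = b_{rj} / p_Ŷ(j)` with value
`b_{rj}² / p_Ŷ(j) = p(j,r)² / (p_Ŷ(j) p_S(r))`.
-/

open Finset Real Matrix

namespace Matrix

variable {ι κ R : Type*} [Fintype ι] [Fintype κ] [CommSemiring R]

theorem trace_mul_diagonal_mul_transpose [DecidableEq ι] (d : ι → R) (W : Matrix κ ι R) :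
    (W * diagonal d * Wᵀ).trace = ∑ r, ∑ j, d j * W r j ^ 2 := by
  simp only [trace, diag, mul_apply, diagonal_apply, mul_ite, mul_zero, sum_ite_eq',
    mem_univ, if_true, transpose_apply]
  exact sum_congr rfl fun r _ => sum_congr rfl fun j _ => by ring

theorem trace_mul_mul_diagonal [DecidableEq κ] (W : Matrix κ ι R) (P : Matrix ι κ R) (d : κ → R) :
    (W * P * diagonal d).trace = ∑ r, ∑ j, W r j * P j r * d r := by
  simp only [trace, diag, mul_diagonal, mul_apply (M := W), sum_mul]

end Matrix

theorem two_mul_mul_sub_mul_sq_le {a : ℝ} (ha : 0 < a) (b x : ℝ) :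
    2 * b * x - a * x ^ 2 ≤ b ^ 2 / a := by
  rw [le_div_iff₀ ha]
  nlinarith [sq_nonneg (a * x - b)]

theorem two_mul_mul_div_sub_mul_div_sq {a : ℝ} (ha : a ≠ 0) (b : ℝ) :
    2 * b * (b / a) - a * (b / a) ^ 2 = b ^ 2 / a := by
  field_simp
  ring

theorem isGreatest_sum_sum_two_mul_mul_sub_mul_sq {ι κ : Type*} [Fintype ι] [Fintype κ]
    {a : ι → ℝ} (ha : ∀ j, 0 < a j) (b : κ → ι → ℝ) :
    IsGreatest {v | ∃ W : Matrix κ ι ℝ, v = ∑ r, ∑ j, (2 * b r j * W r j - a j * W r j ^ 2)}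
      (∑ r, ∑ j, b r j ^ 2 / a j) := by
  refine ⟨⟨of fun r j => b r j / a j, ?_⟩, ?_⟩
  · simp only [of_apply, two_mul_mul_div_sub_mul_div_sq (ha _).ne']
  · rintro v ⟨W, rfl⟩
    exact sum_le_sum fun r _ => sum_le_sum fun j _ => two_mul_mul_sub_mul_sq_le (ha j) _ _

theorem ermi_variational_general (m k : ℕ)
    (p : Fin m × Fin k → ℝ)
    (hY : ∀ j : Fin m, 0 < ∑ r, p (j, r))
    (hS : ∀ r : Fin k, 0 < ∑ j, p (j, r)) :
    IsGreatest
      {v : ℝ | ∃ W : Matrix (Fin k) (Fin m) ℝ,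
        v = -(W * Matrix.diagonal (fun j => ∑ r, p (j, r)) * Wᵀ).trace
            + 2 * (W * (Matrix.of fun j r => p (j, r))
                * Matrix.diagonal (fun r => (Real.sqrt (∑ j, p (j, r)))⁻¹)).trace
            - 1}
      ((∑ j, ∑ r, (p (j, r)) ^ 2 / ((∑ r', p (j, r')) * (∑ j', p (j', r)))) - 1) := by
  set pY : Fin m → ℝ := fun j => ∑ r, p (j, r)
  set pS : Fin k → ℝ := fun r => ∑ j, p (j, r)
  set b : Fin k → Fin m → ℝ := fun r j => p (j, r) * (√(pS r))⁻¹
  have hΨ : ∀ W : Matrix (Fin k) (Fin m) ℝ,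
      -(W * diagonal pY * Wᵀ).trace + 2 * (W * (of fun j r => p (j, r)) * diagonal
        (fun r => (√(pS r))⁻¹)).trace - 1
        = ∑ r, ∑ j, (2 * b r j * W r j - pY j * W r j ^ 2) - 1 := by
    intro W
    rw [trace_mul_diagonal_mul_transpose, trace_mul_mul_diagonal]
    simp only [of_apply, b, sub_eq_add_neg, mul_sum, ← sum_neg_distrib, ← sum_add_distrib]
    congr 1
    exact sum_congr rfl fun r _ => sum_congr rfl fun j _ => by ring
  have hD : ∑ j, ∑ r, p (j, r) ^ 2 / (pY j * pS r) = ∑ r, ∑ j, b r j ^ 2 / pY j := by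
    rw [sum_comm]
    refine sum_congr rfl fun r _ => sum_congr rfl fun j _ => ?_
    rw [mul_pow, inv_pow, sq_sqrt (hS r).le]
    ring
  obtain ⟨⟨W₀, hW₀⟩, hbound⟩ := isGreatest_sum_sum_two_mul_mul_sub_mul_sq hY b
  refine ⟨⟨W₀, ?_⟩, ?_⟩
  · rw [hΨ, ← hW₀, hD]
  · rintro v ⟨W, rfl⟩
    rw [hΨ, hD]
    linarith [hbound ⟨W, rfl⟩]

/-- variational (min-max) characterization of ERMI:
the supremum over `W` of `Ψ(W)` is attained and equals `D_R(Ŷ;S)`. -/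
theorem ermi_variational (m k : ℕ) (hm : 0 < m) (hk : 0 < k)
    (p : Fin m × Fin k → ℝ)
    (hpos : ∀ x, 0 ≤ p x)
    (hsum : ∑ x, p x = 1)
    (hY : ∀ j : Fin m, 0 < ∑ r, p (j, r))
    (hS : ∀ r : Fin k, 0 < ∑ j, p (j, r)) :
    IsGreatest
      {v : ℝ | ∃ W : Matrix (Fin k) (Fin m) ℝ,
        v = -(W * Matrix.diagonal (fun j => ∑ r, p (j, r)) * Wᵀ).trace
            + 2 * (W * (Matrix.of fun j r => p (j, r))
                * Matrix.diagonal (fun r => (Real.sqrt (∑ j, p (j, r)))⁻¹)).trace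
            - 1}
      ((∑ j, ∑ r, (p (j, r)) ^ 2 / ((∑ r', p (j, r')) * (∑ j', p (j', r)))) - 1) :=
  ermi_variational_general m k p hY hS
end

section
/- (ERMI upper bounds Shannon mutual information) For a joint pmf p on [m]×[k] with strictly positive marginals, the Shannon mutual information I(Ŷ;S) = ∑_{j,r} p(j,r) log( p(j,r) / (p_Ŷ(j) p_S(r)) ) satisfies 0 ≤ I(Ŷ;S) ≤ D_R(Ŷ;S), where D_R(Ŷ;S) = ∑_{j,r} p(j,r)²/(p_Ŷ(j) p_S(r)) − 1. -/
/-!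
Both bounds are termwise: with `q = p_Ŷ p_S`, the inequality `x - 1 ≤ x log x ≤ x² - x` (for `x ≥ 0`)
at `x = p / q`, scaled by `q`, gives
`p - q ≤ p log (p / q) ≤ p² / q - p`. Summing, `∑ p = ∑ q = 1` cancels the linear terms.
-/

open Finset Real

namespace Real

lemma sub_le_mul_log_div {a q : ℝ} (ha : 0 ≤ a) (hq : 0 < q) :
    a - q ≤ a * log (a / q) := by
  have h := mul_nonneg hq.le (InformationTheory.klFun_nonneg (div_nonneg ha hq.le))
  rw [InformationTheory.klFun] at h
  have : q * (a / q * log (a / q) + 1 - a / q) = a * log (a / q) + q - a := by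
    field_simp
  linarith

lemma mul_log_div_le {a q : ℝ} (ha : 0 ≤ a) (hq : 0 < q) :
    a * log (a / q) ≤ a ^ 2 / q - a := by
  obtain rfl | ha := ha.eq_or_lt
  · simp
  calc a * log (a / q) ≤ a * (a / q - 1) :=
        mul_le_mul_of_nonneg_left (log_le_sub_one_of_pos (div_pos ha hq)) ha.le
    _ = a ^ 2 / q - a := by ring

end Real

section Divergences

variable {ι : Type*} {s : Finset ι} {p q : ι → ℝ}

lemma sum_sub_sum_le_sum_mul_log_div (hp : ∀ i ∈ s, 0 ≤ p i) (hq : ∀ i ∈ s, 0 < q i) :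
    ∑ i ∈ s, p i - ∑ i ∈ s, q i ≤ ∑ i ∈ s, p i * log (p i / q i) := by
  rw [← sum_sub_distrib]
  exact sum_le_sum fun i hi ↦ sub_le_mul_log_div (hp i hi) (hq i hi)

lemma sum_mul_log_div_le (hp : ∀ i ∈ s, 0 ≤ p i) (hq : ∀ i ∈ s, 0 < q i) :
    ∑ i ∈ s, p i * log (p i / q i) ≤ ∑ i ∈ s, p i ^ 2 / q i - ∑ i ∈ s, p i := by
  rw [← sum_sub_distrib]
  exact sum_le_sum fun i hi ↦ mul_log_div_le (hp i hi) (hq i hi)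

end Divergences

lemma sum_mul_marginals_eq_one {m k : ℕ} (p : Fin m × Fin k → ℝ) (hsum : ∑ x, p x = 1) :
    ∑ x : Fin m × Fin k, (∑ r', p (x.1, r')) * (∑ j', p (j', x.2)) = 1 := by
  have hY : ∑ j, ∑ r, p (j, r) = 1 := by rw [← hsum, Fintype.sum_prod_type]
  have hS : ∑ r, ∑ j, p (j, r) = 1 := by rw [sum_comm, hY]
  simp only [Fintype.sum_prod_type]
  rw [← sum_mul_sum, hY, hS, one_mul]

theorem shannon_mi_le_ermi_general (m k : ℕ)
    (p : Fin m × Fin k → ℝ)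
    (hpos : ∀ x, 0 ≤ p x)
    (hsum : ∑ x, p x = 1)
    (hY : ∀ j : Fin m, 0 < ∑ r, p (j, r))
    (hS : ∀ r : Fin k, 0 < ∑ j, p (j, r)) :
    0 ≤ ∑ j, ∑ r, p (j, r)
          * Real.log (p (j, r) / ((∑ r', p (j, r')) * (∑ j', p (j', r))))
    ∧ ∑ j, ∑ r, p (j, r)
          * Real.log (p (j, r) / ((∑ r', p (j, r')) * (∑ j', p (j', r))))
        ≤ (∑ j, ∑ r, (p (j, r)) ^ 2
              / ((∑ r', p (j, r')) * (∑ j', p (j', r)))) - 1 := by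
  have hq : ∀ x : Fin m × Fin k, x ∈ univ → 0 < (∑ r', p (x.1, r')) * (∑ j', p (j', x.2)) :=
    fun x _ ↦ mul_pos (hY x.1) (hS x.2)
  have lower := sum_sub_sum_le_sum_mul_log_div (fun x _ ↦ hpos x) hq
  have upper := sum_mul_log_div_le (fun x _ ↦ hpos x) hq
  rw [sum_mul_marginals_eq_one p hsum, hsum] at lower
  rw [hsum] at upper
  simp only [Fintype.sum_prod_type] at lower upper
  exact ⟨by linarith, upper⟩

/-- ERMI upper bounds Shannon mutual information:
`0 ≤ I(Ŷ;S) ≤ D_R(Ŷ;S)`. -/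
theorem shannon_mi_le_ermi (m k : ℕ) (hm : 0 < m) (hk : 0 < k)
    (p : Fin m × Fin k → ℝ)
    (hpos : ∀ x, 0 ≤ p x)
    (hsum : ∑ x, p x = 1)
    (hY : ∀ j : Fin m, 0 < ∑ r, p (j, r))
    (hS : ∀ r : Fin k, 0 < ∑ j, p (j, r)) :
    0 ≤ ∑ j, ∑ r, p (j, r)
          * Real.log (p (j, r) / ((∑ r', p (j, r')) * (∑ j', p (j', r))))
    ∧ ∑ j, ∑ r, p (j, r)
          * Real.log (p (j, r) / ((∑ r', p (j, r')) * (∑ j', p (j', r))))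
        ≤ (∑ j, ∑ r, (p (j, r)) ^ 2
              / ((∑ r', p (j, r')) * (∑ j', p (j', r)))) - 1 :=
  shannon_mi_le_ermi_general m k p hpos hsum hY hS
end

section
/- (L_∞ bounded by L_1, hence by √ERMI) For a joint pmf p on [m]×[k] with strictly positive marginals, the L_∞ demographic parity violation max_{j,r} |p(j,r) − p_Ŷ(j) p_S(r)| is at most √(D_R(Ŷ;S)). -/
/-!
Let `q` be the product of the two marginals of `p`. Then `D_R = ∑ (p - q)² / q` is the
χ²-divergence of `p` from `q`. Every `q(j, r)` lies in `(0, 1]`, the marginals being positive with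
sum 1, so each term `(p - q)² / q` dominates `(p - q)²`, and a single nonnegative term is at most
the whole sum.
-/

open Finset Real

section ChiSquare

variable {ι : Type*} [Fintype ι]

lemma le_one_of_sum_eq_one {f : ι → ℝ} (hf : ∀ i, 0 ≤ f i)
    (hsum : ∑ i, f i = 1) (i : ι) : f i ≤ 1 :=
  hsum ▸ single_le_sum (fun i _ => hf i) (mem_univ i)

lemma sum_sq_sub_div_eq (p q : ι → ℝ) (hq : ∀ i, q i ≠ 0) :
    ∑ i, (p i - q i) ^ 2 / q i = ∑ i, p i ^ 2 / q i - 2 * ∑ i, p i + ∑ i, q i := by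
  rw [mul_sum, ← sum_sub_distrib, ← sum_add_distrib]
  refine sum_congr rfl fun i _ => ?_
  field_simp [hq i]
  ring

lemma sq_sub_le_sum_sq_sub_div (p q : ι → ℝ) (hq₀ : ∀ i, 0 < q i) (hq₁ : ∀ i, q i ≤ 1) (i : ι) :
    (p i - q i) ^ 2 ≤ ∑ i, (p i - q i) ^ 2 / q i :=
  (le_div_self (sq_nonneg _) (hq₀ i) (hq₁ i)).trans <|
    single_le_sum (f := fun i => (p i - q i) ^ 2 / q i)
      (fun i _ => div_nonneg (sq_nonneg _) (hq₀ i).le) (mem_univ i)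

lemma abs_sub_le_sqrt_sum_sq_div_sub_one (p q : ι → ℝ) (hp : ∑ i, p i = 1) (hq : ∑ i, q i = 1)
    (hq₀ : ∀ i, 0 < q i) (hq₁ : ∀ i, q i ≤ 1) (i : ι) :
    |p i - q i| ≤ √(∑ i, p i ^ 2 / q i - 1) := by
  apply abs_le_sqrt
  calc (p i - q i) ^ 2 ≤ ∑ i, (p i - q i) ^ 2 / q i := sq_sub_le_sum_sq_sub_div p q hq₀ hq₁ i
    _ = ∑ i, p i ^ 2 / q i - 1 := by
      rw [sum_sq_sub_div_eq p q fun i => (hq₀ i).ne', hp, hq]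
      ring

end ChiSquare

section Marginals

variable {α β : Type*} [Fintype α] [Fintype β]

lemma sum_sum_eq_one {p : α × β → ℝ} (hsum : ∑ x, p x = 1) : ∑ a, ∑ b, p (a, b) = 1 := by
  rw [← hsum, Fintype.sum_prod_type]

lemma sum_mul_marginals_eq_one_s10 {p : α × β → ℝ} (hsum : ∑ x, p x = 1) :
    ∑ x : α × β, (∑ b, p (x.1, b)) * ∑ a, p (a, x.2) = 1 := by
  rw [Fintype.sum_prod_type]
  dsimp only
  rw [← Fintype.sum_mul_sum, sum_sum_eq_one hsum, sum_comm,
    sum_sum_eq_one hsum, one_mul]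

end Marginals

theorem linf_violation_le_sqrt_ermi_general (m k : ℕ)
    (p : Fin m × Fin k → ℝ)
    (hsum : ∑ x, p x = 1)
    (hY : ∀ j : Fin m, 0 < ∑ r, p (j, r))
    (hS : ∀ r : Fin k, 0 < ∑ j, p (j, r)) :
    ∀ (j : Fin m) (r : Fin k),
      |p (j, r) - (∑ r', p (j, r')) * (∑ j', p (j', r))|
        ≤ Real.sqrt ((∑ j, ∑ r,
            (p (j, r)) ^ 2 / ((∑ r', p (j, r')) * (∑ j', p (j', r)))) - 1) := by
  intro j r
  have hY₁ : ∀ j, ∑ r, p (j, r) ≤ 1 :=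
    le_one_of_sum_eq_one (fun j => (hY j).le) (sum_sum_eq_one hsum)
  have hS₁ : ∀ r, ∑ j, p (j, r) ≤ 1 :=
    le_one_of_sum_eq_one (fun r => (hS r).le) (by rw [sum_comm]; exact sum_sum_eq_one hsum)
  have hchi := abs_sub_le_sqrt_sum_sq_div_sub_one p (fun x => (∑ r', p (x.1, r')) * ∑ j', p (j', x.2))
    hsum (sum_mul_marginals_eq_one_s10 hsum) (fun x => mul_pos (hY x.1) (hS x.2))
    (fun x => mul_le_one₀ (hY₁ x.1) (hS x.2).le (hS₁ x.2)) (j, r)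
  rwa [Fintype.sum_prod_type] at hchi

/-- the L∞ demographic parity violation is at most `√D_R`. -/
theorem linf_violation_le_sqrt_ermi (m k : ℕ) (hm : 0 < m) (hk : 0 < k)
    (p : Fin m × Fin k → ℝ)
    (hpos : ∀ x, 0 ≤ p x)
    (hsum : ∑ x, p x = 1)
    (hY : ∀ j : Fin m, 0 < ∑ r, p (j, r))
    (hS : ∀ r : Fin k, 0 < ∑ j, p (j, r)) :
    ∀ (j : Fin m) (r : Fin k),
      |p (j, r) - (∑ r', p (j, r')) * (∑ j', p (j', r))|
        ≤ Real.sqrt ((∑ j, ∑ r,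
            (p (j, r)) ^ 2 / ((∑ r', p (j, r')) * (∑ j', p (j', r)))) - 1) :=
  linf_violation_le_sqrt_ermi_general m k p hsum hY hS
end

section
/- (Conditional demographic parity L_∞ violation bound) Let p be a joint pmf on [m]×[k] with strictly positive marginals, and let p_min = min_r p_S(r). Define dp := max_{j,r} | p(j,r)/p_S(r) − p_Ŷ(j) | (the maximal deviation of the conditional distribution of Ŷ given S = r from the marginal of Ŷ). Then 0 ≤ dp ≤ (1/p_min) √(D_R(Ŷ;S)). -/
/-!
With `q`, `s` the marginals of `p`, expanding the square and using `∑ p = ∑ q = ∑ s = 1` shows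
that `D_R` is the χ²-distance `∑ (p - q s)² / (q s)`. Since `q j * s r ≤ 1`, the single summand at
`(j, r)` already dominates `(p (j, r) - q j * s r)²`, so `|p (j, r) - q j * s r| ≤ √D_R`; dividing
by `s r ≥ p_min` bounds `|p (j, r) / s r - q j|`.
-/

open Finset Real

section ChiSquare

variable {α β : Type*} [Fintype α] [Fintype β]

theorem sum_sum_sq_sub_mul_div_mul (p : α → β → ℝ) (q : α → ℝ) (s : β → ℝ)
    (hq : ∀ a, q a ≠ 0) (hs : ∀ b, s b ≠ 0) :
    ∑ a, ∑ b, (p a b - q a * s b) ^ 2 / (q a * s b)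
      = ∑ a, ∑ b, p a b ^ 2 / (q a * s b) - 2 * ∑ a, ∑ b, p a b + (∑ a, q a) * ∑ b, s b := by
  have hterm : ∀ a b, (p a b - q a * s b) ^ 2 / (q a * s b)
      = p a b ^ 2 / (q a * s b) - 2 * p a b + q a * s b := by
    intro a b
    field_simp [hq a, hs b]
    ring
  simp only [hterm, sum_add_distrib, sum_sub_distrib, ← mul_sum, sum_mul_sum]

theorem sq_le_sum_sum_sq_sub_mul_div_mul (p : α → β → ℝ) {q : α → ℝ} {s : β → ℝ}
    (hq : ∀ a, 0 < q a) (hs : ∀ b, 0 < s b) (a : α) (b : β) (hqs : q a * s b ≤ 1) :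
    (p a b - q a * s b) ^ 2 ≤ ∑ a, ∑ b, (p a b - q a * s b) ^ 2 / (q a * s b) := by
  have hnonneg : ∀ a b, 0 ≤ (p a b - q a * s b) ^ 2 / (q a * s b) := fun a b =>
    div_nonneg (sq_nonneg _) (mul_pos (hq a) (hs b)).le
  calc (p a b - q a * s b) ^ 2
      ≤ (p a b - q a * s b) ^ 2 / (q a * s b) :=
        le_div_self (sq_nonneg _) (mul_pos (hq a) (hs b)) hqs
    _ ≤ ∑ b, (p a b - q a * s b) ^ 2 / (q a * s b) :=
        single_le_sum (fun b _ => hnonneg a b) (mem_univ b)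
    _ ≤ ∑ a, ∑ b, (p a b - q a * s b) ^ 2 / (q a * s b) :=
        single_le_sum (fun a _ => sum_nonneg fun b _ => hnonneg a b) (mem_univ a)

end ChiSquare

section Marginals

variable {α β : Type*} [Fintype α] [Fintype β] {p : α × β → ℝ}

theorem sum_fst_marginal_eq_one (hsum : ∑ x, p x = 1) : ∑ a, ∑ b, p (a, b) = 1 := by
  rwa [← Fintype.sum_prod_type']

theorem sum_snd_marginal_eq_one (hsum : ∑ x, p x = 1) : ∑ b, ∑ a, p (a, b) = 1 := by
  rw [sum_comm]
  exact sum_fst_marginal_eq_one hsum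

theorem sum_sq_div_mul_marginals_sub_one_eq (hsum : ∑ x, p x = 1)
    (hq : ∀ a, ∑ b, p (a, b) ≠ 0) (hs : ∀ b, ∑ a, p (a, b) ≠ 0) :
    ∑ a, ∑ b, p (a, b) ^ 2 / ((∑ b', p (a, b')) * ∑ a', p (a', b)) - 1
      = ∑ a, ∑ b, (p (a, b) - (∑ b', p (a, b')) * ∑ a', p (a', b)) ^ 2
          / ((∑ b', p (a, b')) * ∑ a', p (a', b)) := by
  rw [sum_sum_sq_sub_mul_div_mul (fun a b => p (a, b)) _ _ hq hs, sum_fst_marginal_eq_one hsum,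
    sum_snd_marginal_eq_one hsum]
  ring

end Marginals

theorem conditional_dp_violation_le_general (m k : ℕ) (hk : 0 < k)
    (p : Fin m × Fin k → ℝ)
    (hsum : ∑ x, p x = 1)
    (hY : ∀ j : Fin m, 0 < ∑ r, p (j, r))
    (hS : ∀ r : Fin k, 0 < ∑ j, p (j, r)) :
    ∀ (j : Fin m) (r : Fin k),
      0 ≤ |p (j, r) / (∑ j', p (j', r)) - (∑ r', p (j, r'))|
      ∧ |p (j, r) / (∑ j', p (j', r)) - (∑ r', p (j, r'))|
        ≤ (1 / (Finset.univ.inf'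
              (Finset.univ_nonempty_iff.mpr (Fin.pos_iff_nonempty.mp hk))
              (fun r' : Fin k => ∑ j', p (j', r'))))
          * Real.sqrt ((∑ j', ∑ r',
              (p (j', r')) ^ 2 / ((∑ r'', p (j', r'')) * (∑ j'', p (j'', r')))) - 1) := by
  intro j r
  refine ⟨abs_nonneg _, ?_⟩
  set q : Fin m → ℝ := fun j' => ∑ r', p (j', r')
  set s : Fin k → ℝ := fun r' => ∑ j', p (j', r')
  set pmin := univ.inf' (univ_nonempty_iff.mpr (Fin.pos_iff_nonempty.mp hk)) s
  have hq_le : q j ≤ 1 :=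
    sum_fst_marginal_eq_one hsum ▸ single_le_sum (fun j' _ => (hY j').le) (mem_univ j)
  have hs_le : s r ≤ 1 :=
    sum_snd_marginal_eq_one hsum ▸ single_le_sum (fun r' _ => (hS r').le) (mem_univ r)
  have hdev : (p (j, r) - q j * s r) ^ 2
      ≤ ∑ j', ∑ r', p (j', r') ^ 2 / (q j' * s r') - 1 := by
    rw [sum_sq_div_mul_marginals_sub_one_eq hsum (fun j' => (hY j').ne') (fun r' => (hS r').ne')]
    exact sq_le_sum_sum_sq_sub_mul_div_mul (fun j' r' => p (j', r')) hY hS j r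
      (mul_le_one₀ hq_le (hS r).le hs_le)
  have hpmin_pos : 0 < pmin := (lt_inf'_iff _).mpr fun r' _ => hS r'
  have hs_pos : 0 < s r := hS r
  calc |p (j, r) / s r - q j| = |p (j, r) - q j * s r| / s r := by
        rw [div_sub' hs_pos.ne', abs_div, abs_of_pos hs_pos, mul_comm]
    _ ≤ √(∑ j', ∑ r', p (j', r') ^ 2 / (q j' * s r') - 1) / pmin :=
        div_le_div₀ (sqrt_nonneg _) (abs_le_sqrt hdev) hpmin_pos (inf'_le _ (mem_univ r))
    _ = 1 / pmin * √(∑ j', ∑ r', p (j', r') ^ 2 / (q j' * s r') - 1) := by ring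

/-- conditional demographic parity L∞ violation bound:
`0 ≤ dp ≤ (1/p_min) √D_R` where `p_min = min_r p_S(r)`. -/
theorem conditional_dp_violation_le (m k : ℕ) (hm : 0 < m) (hk : 0 < k)
    (p : Fin m × Fin k → ℝ)
    (hpos : ∀ x, 0 ≤ p x)
    (hsum : ∑ x, p x = 1)
    (hY : ∀ j : Fin m, 0 < ∑ r, p (j, r))
    (hS : ∀ r : Fin k, 0 < ∑ j, p (j, r)) :
    ∀ (j : Fin m) (r : Fin k),
      0 ≤ |p (j, r) / (∑ j', p (j', r)) - (∑ r', p (j, r'))|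
      ∧ |p (j, r) / (∑ j', p (j', r)) - (∑ r', p (j, r'))|
        ≤ (1 / (Finset.univ.inf'
              (Finset.univ_nonempty_iff.mpr (Fin.pos_iff_nonempty.mp hk))
              (fun r' : Fin k => ∑ j', p (j', r'))))
          * Real.sqrt ((∑ j', ∑ r',
              (p (j', r')) ^ 2 / ((∑ r'', p (j', r'')) * (∑ j'', p (j'', r')))) - 1) :=
  conditional_dp_violation_le_general m k hk p hsum hY hS
end
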